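/- arXiv:2210.07320 — 2 statements merged into one kernel-verified Lean document; each statement's English description precedes it below -/
import Mathlib

section
/- Every normal 2×2 complex matrix can be written in the form [[a, b], [e^{2ik}·conj(b), a + m·e^{ik}]] for some a, b ∈ ℂ and k, m ∈ ℝ. -/
/-!
Write `M = !![a, b; c, d]` and `w = d - a`. The diagonal entries of `M Mᴴ = Mᴴ M` give
`‖b‖ = ‖c‖`, hence `c = e^{2ik} conj b` for some real `k`; the off-diagonal ones give
`conj c * w = b * conj w`, which for `b ≠ 0` becomes `w = e^{2ik} conj w`, i.e. `e^{-ik} w` is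
real.
When `b = 0` the phase `k` is free and is chosen from `w` alone.
-/

open Complex Matrix ComplexConjugate

namespace Complex

lemma exists_eq_exp_mul_conj_of_norm_eq {b c : ℂ} (h : ‖c‖ = ‖b‖) :
    ∃ k : ℝ, c = exp (2 * I * k) * conj b := by
  rcases eq_or_ne b 0 with rfl | hb
  · exact ⟨0, by simpa using h⟩
  have hu : ‖c / conj b‖ = 1 := by
    rw [norm_div, norm_conj, h, div_self (norm_ne_zero_iff.mpr hb)]
  refine ⟨arg (c / conj b) / 2, ?_⟩
  have hexp : exp (2 * I * ↑(arg (c / conj b) / 2)) = c / conj b := by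
    conv_rhs => rw [← norm_mul_exp_arg_mul_I (c / conj b), hu]
    push_cast; ring_nf
  rw [hexp, div_mul_cancel₀ _ ((map_ne_zero _).mpr hb)]

lemma exists_eq_exp_mul_conj_of_norm_eq_of_conj_mul_eq {b c w : ℂ} (hnorm : ‖c‖ = ‖b‖)
    (hcw : conj c * w = b * conj w) :
    ∃ k : ℝ, c = exp (2 * I * k) * conj b ∧ w = exp (2 * I * k) * conj w := by
  rcases eq_or_ne b 0 with rfl | hb
  · obtain ⟨k, hk⟩ := exists_eq_exp_mul_conj_of_norm_eq (rfl : ‖w‖ = ‖w‖)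
    exact ⟨k, by simpa using hnorm, hk⟩
  obtain ⟨k, hk⟩ := exists_eq_exp_mul_conj_of_norm_eq hnorm
  refine ⟨k, hk, mul_left_cancel₀ hb ?_⟩
  have hconj : conj (exp (2 * I * k)) * exp (2 * I * k) = 1 := by
    rw [← exp_conj, ← exp_add]; simp [map_ofNat]
  rw [hk, map_mul, conj_conj] at hcw
  linear_combination exp (2 * I * k) * hcw - b * w * hconj

lemma exists_eq_ofReal_mul_exp_of_eq_exp_mul_conj {w : ℂ} {k : ℝ}
    (h : w = exp (2 * I * k) * conj w) : ∃ m : ℝ, w = m * exp (I * k) := by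
  have hconj : conj (exp (I * k)) = (exp (I * k))⁻¹ := by rw [← exp_conj, ← exp_neg]; simp
  have hsq : exp (2 * I * k) = exp (I * k) * exp (I * k) := by rw [← exp_add]; ring_nf
  have he : exp (I * k) ≠ 0 := exp_ne_zero _
  have hreal : conj ((exp (I * k))⁻¹ * w) = (exp (I * k))⁻¹ * w := by
    rw [map_mul, map_inv₀, hconj, inv_inv]
    field_simp
    linear_combination -h - conj w * hsq
  refine ⟨((exp (I * k))⁻¹ * w).re, ?_⟩
  rw [conj_eq_iff_re.mp hreal]
  field_simp

end Complex

namespace Matrix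

variable {M : Matrix (Fin 2) (Fin 2) ℂ}

lemma norm_one_zero_eq_norm_zero_one_of_normal (hM : M * Mᴴ = Mᴴ * M) :
    ‖M 1 0‖ = ‖M 0 1‖ := by
  have h00 := congrFun (congrFun hM 0) 0
  simp only [mul_apply, Fin.sum_univ_two, conjTranspose_apply, RCLike.star_def] at h00
  rw [← sq_eq_sq₀ (norm_nonneg _) (norm_nonneg _), ← ofReal_inj]
  push_cast
  rw [← mul_conj', ← mul_conj']
  linear_combination -h00

lemma conj_one_zero_mul_sub_eq_of_normal (hM : M * Mᴴ = Mᴴ * M) :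
    conj (M 1 0) * (M 1 1 - M 0 0) = M 0 1 * conj (M 1 1 - M 0 0) := by
  have h01 := congrFun (congrFun hM 0) 1
  simp only [mul_apply, Fin.sum_univ_two, conjTranspose_apply, RCLike.star_def] at h01
  rw [map_sub]
  linear_combination -h01

end Matrix

theorem stmt_1 (M : Matrix (Fin 2) (Fin 2) ℂ) (hM : M * Mᴴ = Mᴴ * M) :
    ∃ (a b : ℂ) (k m : ℝ),
      M = !![a, b;
             Complex.exp (2 * Complex.I * k) * starRingEnd ℂ b,
             a + m * Complex.exp (Complex.I * k)] := by
  obtain ⟨k, hc, hw⟩ := exists_eq_exp_mul_conj_of_norm_eq_of_conj_mul_eq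
    (norm_one_zero_eq_norm_zero_one_of_normal hM) (conj_one_zero_mul_sub_eq_of_normal hM)
  obtain ⟨m, hm⟩ := exists_eq_ofReal_mul_exp_of_eq_exp_mul_conj hw
  refine ⟨M 0 0, M 0 1, k, m, ?_⟩
  rw [← hc, ← hm, add_sub_cancel, ← eta_fin_two M]
end

section
/- Let X = e^{2iθ}|00⟩⟨ψ₁| − e^{-iφ}e^{-2iθ}|ψ₁⟩⟨11| + |00⟩⟨ψ₂| + e^{-iφ}|ψ₂⟩⟨11| (up to overall factor 1/2), with ψ₁ = (1/√2)(|01⟩+e^{iφ}|10⟩), ψ₂ = (1/√2)(|01⟩−e^{iφ}|10⟩). Then the partial traces satisfy Tr_A X = e^{iφ}·Tr_B X, i.e. X satisfies the phase-locking condition with phase shift φ even though it contains components of both phase delays φ and φ+π. -/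
/-! With `ψ = s (|01⟩ + c |10⟩)`, each partial trace of `|00⟩⟨ψ|` and of `|ψ⟩⟨11|` is a multiple
of `|0⟩⟨1|`, with coefficient `s`, `s c` or its conjugate. Collecting the four terms of `X`
(`ψ₁, ψ₂` are the cases `c = ± e^{iφ}`), the `e^{2iθ}`-independent parts cancel and
`Tr_A X = (s/2)(e^{2iθ} - e^{-2iθ}) |0⟩⟨1| = e^{iφ} Tr_B X`, using only `e^{iφ} e^{-iφ} = 1`. -/

open Complex Matrix

noncomputable section

abbrev Q := Fin 2 × Fin 2

def ket (a b : Fin 2) : Q → ℂ := fun p => if p = (a, b) then 1 else 0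

/-- The outer product |u⟩⟨v| of two vectors on ℂ²⊗ℂ². -/
def outer (u v : Q → ℂ) : Matrix Q Q ℂ :=
  Matrix.of fun p q => u p * starRingEnd ℂ (v q)

/-- Partial trace over the first qubit. -/
def trA (X : Matrix Q Q ℂ) : Matrix (Fin 2) (Fin 2) ℂ :=
  Matrix.of fun i j => ∑ k, X (k, i) (k, j)

/-- Partial trace over the second qubit. -/
def trB (X : Matrix Q Q ℂ) : Matrix (Fin 2) (Fin 2) ℂ :=
  Matrix.of fun i j => ∑ k, X (i, k) (j, k)

lemma trA_add (X Y : Matrix Q Q ℂ) : trA (X + Y) = trA X + trA Y := by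
  ext i j
  simp [trA, Finset.sum_add_distrib]

lemma trA_sub (X Y : Matrix Q Q ℂ) : trA (X - Y) = trA X - trA Y := by
  ext i j
  simp [trA, Finset.sum_sub_distrib]

lemma trA_smul (c : ℂ) (X : Matrix Q Q ℂ) : trA (c • X) = c • trA X := by
  ext i j
  simp only [trA, Matrix.smul_apply, of_apply, smul_eq_mul, Finset.mul_sum]

lemma trB_add (X Y : Matrix Q Q ℂ) : trB (X + Y) = trB X + trB Y := by
  ext i j
  simp [trB, Finset.sum_add_distrib]

lemma trB_sub (X Y : Matrix Q Q ℂ) : trB (X - Y) = trB X - trB Y := by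
  ext i j
  simp [trB, Finset.sum_sub_distrib]

lemma trB_smul (c : ℂ) (X : Matrix Q Q ℂ) : trB (c • X) = c • trB X := by
  ext i j
  simp only [trB, Matrix.smul_apply, of_apply, smul_eq_mul, Finset.mul_sum]

def oneExcitation (s c : ℂ) : Q → ℂ := fun p => s * (ket 0 1 p + c * ket 1 0 p)

section oneExcitation

variable (s c : ℂ)

lemma trA_outer_ket00_oneExcitation :
    trA (outer (ket 0 0) (oneExcitation s c)) = star s • single 0 1 1 := by
  ext i j
  fin_cases i <;> fin_cases j <;> simp [trA, outer, ket, oneExcitation, Fin.sum_univ_two]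

lemma trB_outer_ket00_oneExcitation :
    trB (outer (ket 0 0) (oneExcitation s c)) = star (s * c) • single 0 1 1 := by
  ext i j
  fin_cases i <;> fin_cases j <;> simp [trB, outer, ket, oneExcitation, Fin.sum_univ_two]

lemma trA_outer_oneExcitation_ket11 :
    trA (outer (oneExcitation s c) (ket 1 1)) = (s * c) • single 0 1 1 := by
  ext i j
  fin_cases i <;> fin_cases j <;> simp [trA, outer, ket, oneExcitation, Fin.sum_univ_two]

lemma trB_outer_oneExcitation_ket11 :
    trB (outer (oneExcitation s c) (ket 1 1)) = s • single 0 1 1 := by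
  ext i j
  fin_cases i <;> fin_cases j <;> simp [trB, outer, ket, oneExcitation, Fin.sum_univ_two]

end oneExcitation

lemma star_exp_I_mul_ofReal (φ : ℝ) :
    star (Complex.exp (Complex.I * φ)) = Complex.exp (-(Complex.I * φ)) := by
  rw [star_def, ← Complex.exp_conj, map_mul, Complex.conj_I, Complex.conj_ofReal, neg_mul]

theorem stmt_19 (θ φ : ℝ) (ψ₁ ψ₂ : Q → ℂ)
    (hψ₁ : ψ₁ = fun p => (1 / Real.sqrt 2 : ℝ) *
      (ket 0 1 p + Complex.exp (Complex.I * φ) * ket 1 0 p))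
    (hψ₂ : ψ₂ = fun p => (1 / Real.sqrt 2 : ℝ) *
      (ket 0 1 p - Complex.exp (Complex.I * φ) * ket 1 0 p))
    (X : Matrix Q Q ℂ)
    (hX : X = (1 / 2 : ℂ) •
      (Complex.exp (2 * Complex.I * θ) • outer (ket 0 0) ψ₁
        - (Complex.exp (-(Complex.I * φ)) * Complex.exp (-(2 * Complex.I * θ))) •
            outer ψ₁ (ket 1 1)
        + outer (ket 0 0) ψ₂
        + Complex.exp (-(Complex.I * φ)) • outer ψ₂ (ket 1 1))) :
    trA X = Complex.exp (Complex.I * φ) • trB X := by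
  set s : ℂ := ((1 / Real.sqrt 2 : ℝ) : ℂ)
  set w := Complex.exp (Complex.I * φ)
  have h₁ : ψ₁ = oneExcitation s w := hψ₁
  have h₂ : ψ₂ = oneExcitation s (-w) := by
    rw [hψ₂]; funext p; simp only [oneExcitation]; ring
  have hs : star s = s := Complex.conj_ofReal _
  have hw : w * star w = 1 := by
    rw [star_exp_I_mul_ofReal, ← Complex.exp_add, add_neg_cancel, Complex.exp_zero]
  subst hX h₁ h₂
  simp only [trA_add, trA_sub, trA_smul, trB_add, trB_sub, trB_smul,
    trA_outer_ket00_oneExcitation, trB_outer_ket00_oneExcitation,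
    trA_outer_oneExcitation_ket11, trB_outer_oneExcitation_ket11,
    ← star_exp_I_mul_ofReal, star_mul', star_neg, hs, smul_smul, ← add_smul, ← sub_smul]
  congr 1
  linear_combination (-(1 / 2) * s * (Complex.exp (2 * Complex.I * θ) + 1)) * hw
end
end
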